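/- arXiv:2205.05139 — 7 statements merged into one kernel-verified Lean document; each statement's English description precedes it below -/
import Mathlib

section
/- Let W and B be finite sets, let E ⊆ W × B be the edge set of a bipartite graph, and let n ≥ 1. Then the sum, over all n-multiwebs m of the graph (i.e. n-multiwebs m : W × B → ℕ with m(w,b) = 0 whenever (w,b) ∉ E), of the number of edge-n-colorings of m, equals the n-th power of the number of perfect matchings of the graph, where a perfect matching is a bijection f : W → B with (w, f(w)) ∈ E for every w ∈ W. -/
/-- Proposition 1.1 (`Z_{nd} = (Z_d)^n`) in combinatorial form: for a bipartite graph with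
white vertices `W`, black vertices `B` and edge set `E ⊆ W × B`, the sum over all
`n`-multiwebs `m` supported on `E` of the number of edge-`n`-colorings of `m` equals the
`n`-th power of the number of perfect matchings. -/
theorem sum_multiweb_colorings_eq_matchings_pow {W B : Type*}
    [Fintype W] [Fintype B] [DecidableEq W] [DecidableEq B]
    (E : Finset (W × B)) (n : ℕ) (hn : 1 ≤ n) :
    ∑ m ∈ (Fintype.piFinset fun _ : W × B => Finset.range (n + 1)).filter
        (fun m : W × B → ℕ =>
          (∀ p, p ∉ E → m p = 0) ∧
          (∀ w : W, ∑ b : B, m (w, b) = n) ∧ (∀ b : B, ∑ w : W, m (w, b) = n)),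
      (Finset.univ.filter (fun c : W × B → Finset (Fin n) =>
          (∀ p, (c p).card = m p) ∧
          (∀ w : W, ∀ b b' : B, b ≠ b' → Disjoint (c (w, b)) (c (w, b'))) ∧
          (∀ w : W, Finset.univ.biUnion (fun b : B => c (w, b)) = Finset.univ) ∧
          (∀ b : B, ∀ w w' : W, w ≠ w' → Disjoint (c (w, b)) (c (w', b))) ∧
          (∀ b : B, Finset.univ.biUnion (fun w : W => c (w, b)) = Finset.univ))).card =
    ((Finset.univ.filter (fun f : W → B =>
        Function.Bijective f ∧ ∀ w, (w, f w) ∈ E)).card) ^ n := by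
  classical
  set Mset : Finset (W → B) := Finset.univ.filter (fun f : W → B =>
      Function.Bijective f ∧ ∀ w, (w, f w) ∈ E) with hMset
  set S : Finset (W × B → ℕ) :=
    (Fintype.piFinset fun _ : W × B => Finset.range (n + 1)).filter
        (fun m : W × B → ℕ =>
          (∀ p, p ∉ E → m p = 0) ∧
          (∀ w : W, ∑ b : B, m (w, b) = n) ∧ (∀ b : B, ∑ w : W, m (w, b) = n)) with hSdef
  set s : Finset (W × B → Finset (Fin n)) := Finset.univ.filter (fun c =>
      ((∀ w : W, ∀ b b' : B, b ≠ b' → Disjoint (c (w, b)) (c (w, b'))) ∧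
       (∀ w : W, Finset.univ.biUnion (fun b : B => c (w, b)) = Finset.univ) ∧
       (∀ b : B, ∀ w w' : W, w ≠ w' → Disjoint (c (w, b)) (c (w', b))) ∧
       (∀ b : B, Finset.univ.biUnion (fun w : W => c (w, b)) = Finset.univ)) ∧
      (∀ p, p ∉ E → c p = ∅)) with hsdef
  have hsmem : ∀ c : W × B → Finset (Fin n), c ∈ s ↔
      ((∀ w : W, ∀ b b' : B, b ≠ b' → Disjoint (c (w, b)) (c (w, b'))) ∧
       (∀ w : W, Finset.univ.biUnion (fun b : B => c (w, b)) = Finset.univ) ∧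
       (∀ b : B, ∀ w w' : W, w ≠ w' → Disjoint (c (w, b)) (c (w', b))) ∧
       (∀ b : B, Finset.univ.biUnion (fun w : W => c (w, b)) = Finset.univ)) ∧
      (∀ p, p ∉ E → c p = ∅) := by
    intro c; simp [hsdef]
  -- row and column sums
  have hrow : ∀ c ∈ s, ∀ w : W, ∑ b : B, (c (w, b)).card = n := by
    intro c hc w
    obtain ⟨⟨hd, hu, _, _⟩, _⟩ := (hsmem c).1 hc
    have := congrArg Finset.card (hu w)
    rw [Finset.card_biUnion (fun b _ b' _ hbb => hd w b b' hbb)] at this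
    simpa using this
  have hcol : ∀ c ∈ s, ∀ b : B, ∑ w : W, (c (w, b)).card = n := by
    intro c hc b
    obtain ⟨⟨_, _, hd, hu⟩, _⟩ := (hsmem c).1 hc
    have := congrArg Finset.card (hu b)
    rw [Finset.card_biUnion (fun w _ w' _ hww => hd b w w' hww)] at this
    simpa using this
  have hKey : ∀ c ∈ s, (fun p => (c p).card) ∈ S := by
    intro c hc
    obtain ⟨_, hsupp⟩ := (hsmem c).1 hc
    rw [hSdef, Finset.mem_filter]
    refine ⟨?_, ?_, hrow c hc, hcol c hc⟩
    · rw [Fintype.mem_piFinset]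
      intro p
      rw [Finset.mem_range, Nat.lt_succ_iff]
      simpa using Finset.card_le_univ (c p)
    · intro p hp
      simp [hsupp p hp]
  -- Step 1: the LHS equals s.card
  have h1 : ∑ m ∈ S,
      (Finset.univ.filter (fun c : W × B → Finset (Fin n) =>
          (∀ p, (c p).card = m p) ∧
          (∀ w : W, ∀ b b' : B, b ≠ b' → Disjoint (c (w, b)) (c (w, b'))) ∧
          (∀ w : W, Finset.univ.biUnion (fun b : B => c (w, b)) = Finset.univ) ∧
          (∀ b : B, ∀ w w' : W, w ≠ w' → Disjoint (c (w, b)) (c (w', b))) ∧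
          (∀ b : B, Finset.univ.biUnion (fun w : W => c (w, b)) = Finset.univ))).card
      = s.card := by
    rw [Finset.card_eq_sum_card_fiberwise hKey]
    refine Finset.sum_congr rfl ?_
    intro m hm
    congr 1
    ext c
    simp only [Finset.mem_filter, Finset.mem_univ, true_and]
    constructor
    · rintro ⟨hcard, hq1, hq2, hq3, hq4⟩
      have hmS := (Finset.mem_filter.1 (hSdef ▸ hm)).2
      refine ⟨(hsmem c).2 ⟨⟨hq1, hq2, hq3, hq4⟩, ?_⟩, ?_⟩
      · intro p hp
        have : (c p).card = 0 := by rw [hcard p]; exact hmS.1 p hp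
        exact Finset.card_eq_zero.1 this
      · funext p; exact hcard p
    · rintro ⟨hcs, hcm⟩
      obtain ⟨⟨hq1, hq2, hq3, hq4⟩, _⟩ := (hsmem c).1 hcs
      exact ⟨fun p => congrFun hcm p, hq1, hq2, hq3, hq4⟩
  rw [h1]
  -- Step 2: bijection with n-tuples of matchings
  have h2 : s.card = (Fintype.piFinset fun _ : Fin n => Mset).card := by
    refine (Finset.card_bij
      (fun (g : Fin n → W → B) _ =>
        fun p : W × B => Finset.univ.filter (fun i => g i p.1 = p.2)) ?_ ?_ ?_).symm
    · -- maps into s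
      intro g hg
      rw [Fintype.mem_piFinset] at hg
      have hgM : ∀ i, Function.Bijective (g i) ∧ ∀ w, (w, g i w) ∈ E := by
        intro i
        have := hg i
        rw [hMset, Finset.mem_filter] at this
        exact this.2
      rw [hsmem]
      refine ⟨⟨?_, ?_, ?_, ?_⟩, ?_⟩
      · intro w b b' hbb
        rw [Finset.disjoint_left]
        intro i hi hi'
        simp only [Finset.mem_filter] at hi hi'
        exact hbb (hi.2 ▸ hi'.2)
      · intro w
        rw [Finset.eq_univ_iff_forall]
        intro i
        rw [Finset.mem_biUnion]
        exact ⟨g i w, Finset.mem_univ _, by simp⟩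
      · intro b w w' hww
        rw [Finset.disjoint_left]
        intro i hi hi'
        simp only [Finset.mem_filter] at hi hi'
        exact hww ((hgM i).1.1 (hi.2.trans hi'.2.symm))
      · intro b
        rw [Finset.eq_univ_iff_forall]
        intro i
        rw [Finset.mem_biUnion]
        obtain ⟨w, hw⟩ := (hgM i).1.2 b
        exact ⟨w, Finset.mem_univ _, by simp [hw]⟩
      · intro p hp
        rw [Finset.eq_empty_iff_forall_notMem]
        intro i hi
        simp only [Finset.mem_filter] at hi
        have h2 := (hgM i).2 p.1
        rw [hi.2] at h2
        exact hp (by simpa using h2)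
    · -- injective
      intro g hg g' hg' hgg
      funext i w
      have h' : Finset.univ.filter (fun j => g j w = g i w)
          = Finset.univ.filter (fun j => g' j w = g i w) := congrFun hgg (w, g i w)
      have hi : i ∈ Finset.univ.filter (fun j => g j w = g i w) := by simp
      rw [h'] at hi
      exact ((Finset.mem_filter.1 hi).2).symm
    · -- surjective
      intro c hc
      obtain ⟨⟨hq1, hq2, hq3, hq4⟩, hsupp⟩ := (hsmem c).1 hc
      have hex : ∀ (i : Fin n) (w : W), ∃ b, i ∈ c (w, b) := by
        intro i w
        have : i ∈ Finset.univ.biUnion (fun b : B => c (w, b)) := by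
          rw [hq2 w]; exact Finset.mem_univ _
        rw [Finset.mem_biUnion] at this
        obtain ⟨b, _, hb⟩ := this
        exact ⟨b, hb⟩
      set g : Fin n → W → B := fun i w => Classical.choose (hex i w) with hgdef
      have hgmem : ∀ i w, i ∈ c (w, g i w) := fun i w => Classical.choose_spec (hex i w)
      have huniq : ∀ (i : Fin n) (w : W) (b : B), i ∈ c (w, b) → g i w = b := by
        intro i w b hb
        by_contra hne
        exact (Finset.disjoint_left.1 (hq1 w _ _ hne)) (hgmem i w) hb
      refine ⟨g, ?_, ?_⟩
      · rw [Fintype.mem_piFinset]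
        intro i
        rw [hMset, Finset.mem_filter]
        refine ⟨Finset.mem_univ _, ⟨?_, ?_⟩, ?_⟩
        · intro w w' hww
          by_contra hne
          exact (Finset.disjoint_left.1 (hq3 (g i w) _ _ hne)) (hgmem i w)
            (hww ▸ hgmem i w')
        · intro b
          have : i ∈ Finset.univ.biUnion (fun w : W => c (w, b)) := by
            rw [hq4 b]; exact Finset.mem_univ _
          rw [Finset.mem_biUnion] at this
          obtain ⟨w, _, hw⟩ := this
          exact ⟨w, huniq i w b hw⟩
        · intro w
          by_contra hne
          have := hsupp (w, g i w) hne
          exact absurd (hgmem i w) (by simp [this])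
      · funext p
        ext i
        simp only [Finset.mem_filter, Finset.mem_univ, true_and]
        constructor
        · intro h
          have := h ▸ hgmem i p.1
          exact this
        · intro h
          exact huniq i p.1 p.2 h
  rw [h2, Fintype.card_piFinset]
  simp
end

section
/- Let m be an n-multiweb on finite vertex sets W, B with ordering data L, and let L' be obtained from L by changing the order at a single vertex v₀ as follows: if the edges at v₀ in the order L are e₁ < e₂ < … < e_k, then in L' they are ordered e₂ < … < e_k < e₁ (rotating the cilium at v₀ by one 'click' past the edge e₁). Then for every M_n(ℝ)-connection φ one has Tr_{L'}(m, φ) = ε · Tr_L(m, φ), where ε = +1 if n is odd, and ε = (−1)^{m(e₁)} if n is even, m(e₁) being the multiplicity of the edge e₁ crossed by the rotating cilium. -/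
/-- The sign `(−1)^{inversions}` of a list of naturals: the signature of the permutation
it represents when it lists a set of distinct values. -/
def listSign (l : List ℕ) : ℤ :=
  (-1) ^ ((Finset.range l.length ×ˢ Finset.range l.length).filter
      (fun p => p.1 < p.2 ∧ l.getD p.2 0 < l.getD p.1 0)).card

/-- The determinant of the square submatrix of `M` with rows `S` and columns `T`, each
taken in increasing order; junk value `0` if `|S| ≠ |T|`. -/
def subdet {n : ℕ} (M : Matrix (Fin n) (Fin n) ℝ) (S T : Finset (Fin n)) : ℝ :=
  if h : T.card = S.card then
    Matrix.det (Matrix.of fun i j : Fin S.card =>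
      M (S.orderEmbOfFin rfl i) (T.orderEmbOfFin h j))
  else 0

/-- An `n`-multiweb on white vertices `W` and black vertices `B`: all row and column
sums of the multiplicity function equal `n`. -/
def IsMultiweb {W B : Type*} [Fintype W] [Fintype B] (n : ℕ) (m : W × B → ℕ) : Prop :=
  (∀ w : W, ∑ b : B, m (w, b) = n) ∧ (∀ b : B, ∑ w : W, m (w, b) = n)

/-- Ordering data: at each vertex, a list enumerating the opposite vertices once each
(inducing in particular a linear order on the incident edges). -/
def IsOrderData {W B : Type*} [Fintype W] [Fintype B]
    (LW : W → List B) (LB : B → List W) : Prop :=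
  (∀ w, (LW w).Nodup ∧ ∀ b, b ∈ LW w) ∧ (∀ b, (LB b).Nodup ∧ ∀ w, w ∈ LB b)

/-- The colorings of a multiweb `m`: pairs `(S,T)` of functions assigning to each edge
`(w,b)` subsets of `{1,…,n}` of size `m(w,b)`, such that at each white vertex the `S`-sets
partition the colors and at each black vertex the `T`-sets partition the colors. -/
def colorings {W B : Type*} [Fintype W] [Fintype B] [DecidableEq W] [DecidableEq B]
    (n : ℕ) (m : W × B → ℕ) :
    Finset ((W × B → Finset (Fin n)) × (W × B → Finset (Fin n))) :=
  Finset.univ.filter fun ST =>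
    (∀ p, (ST.1 p).card = m p) ∧ (∀ p, (ST.2 p).card = m p) ∧
    (∀ w : W, ∀ b b' : B, b ≠ b' → Disjoint (ST.1 (w, b)) (ST.1 (w, b'))) ∧
    (∀ w : W, Finset.univ.biUnion (fun b : B => ST.1 (w, b)) = Finset.univ) ∧
    (∀ b : B, ∀ w w' : W, w ≠ w' → Disjoint (ST.2 (w, b)) (ST.2 (w', b))) ∧
    (∀ b : B, Finset.univ.biUnion (fun w : W => ST.2 (w, b)) = Finset.univ)

/-- The sign `c_w` at a white vertex `w`: the signature of the permutation of `{1,…,n}`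
obtained by concatenating the sets `S(w,b)`, each listed in increasing order, in the
order of the edges at `w` given by the ordering data. -/
def whiteSign {W B : Type*} {n : ℕ} (LW : W → List B)
    (S : W × B → Finset (Fin n)) (w : W) : ℤ :=
  listSign ((LW w).flatMap fun b => (Finset.sort (S (w, b)) (· ≤ ·)).map Fin.val)

/-- The sign `c_b` at a black vertex `b`, defined analogously using the sets `T(·,b)`. -/
def blackSign {W B : Type*} {n : ℕ} (LB : B → List W)
    (T : W × B → Finset (Fin n)) (b : B) : ℤ :=
  listSign ((LB b).flatMap fun w => (Finset.sort (T (w, b)) (· ≤ ·)).map Fin.val)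

/-- The web-trace `Tr_L(m, φ)` of a multiweb `m` with ordering data `L = (LW, LB)` and
`M_n(ℝ)`-connection `φ` (combinatorial formula of Proposition 3.2):
`Σ_{colorings (S,T)} (∏_v c_v) · ∏_{(w,b)} det(φ(w,b)_{S(w,b),T(w,b)})`. -/
def webTrace {W B : Type*} [Fintype W] [Fintype B] [DecidableEq W] [DecidableEq B]
    (n : ℕ) (m : W × B → ℕ) (LW : W → List B) (LB : B → List W)
    (φ : W × B → Matrix (Fin n) (Fin n) ℝ) : ℝ :=
  ∑ ST ∈ colorings n m,
    (((∏ w, whiteSign LW ST.1 w) * ∏ b, blackSign LB ST.2 b : ℤ) : ℝ) *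
      ∏ p : W × B, subdet (φ p) (ST.1 p) (ST.2 p)

/-! The sign at the rotated vertex is the signature of the concatenation of the colour blocks
along its edges. Rotating moves the first block, of length `k = m(e₁)`, past the others, of total
length `n - k`; since the blocks have disjoint entries, every pair of entries from the two parts
changes its inversion status, so the sign gets multiplied by `(-1)^(k(n-k))`, which is `1` for odd
`n` and `(-1)^k` for even `n`. Nothing else in the term of a colouring changes. -/

open Finset Function

def invCount (l : List ℕ) : ℕ :=
  ∑ i ∈ range l.length, ∑ j ∈ range l.length, if i < j ∧ l.getD j 0 < l.getD i 0 then 1 else 0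

def crossCount (l₁ l₂ : List ℕ) : ℕ :=
  ∑ i ∈ range l₁.length, ∑ j ∈ range l₂.length, if l₂.getD j 0 < l₁.getD i 0 then 1 else 0

lemma listSign_eq_neg_one_pow_invCount (l : List ℕ) : listSign l = (-1) ^ invCount l := by
  rw [listSign, card_filter, sum_product]
  rfl

lemma invCount_append (l₁ l₂ : List ℕ) :
    invCount (l₁ ++ l₂) = invCount l₁ + crossCount l₁ l₂ + invCount l₂ := by
  simp only [invCount, crossCount, List.length_append, sum_range_add, sum_add_distrib]
  have hleft : ∀ i ∈ range l₁.length, (l₁ ++ l₂).getD i 0 = l₁.getD i 0 := fun i hi =>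
    List.getD_append _ _ _ _ (mem_range.mp hi)
  have hnot : ∀ j ∈ range l₁.length, ∀ i, ¬ l₁.length + i < j := fun j hj i => by
    rw [mem_range] at hj; omega
  have hlt : ∀ i ∈ range l₁.length, ∀ j, i < l₁.length + j := fun i hi j => by
    rw [mem_range] at hi; omega
  simp +contextual only [hleft, hnot, hlt, List.getD_append_right, Nat.le_add_right,
    Nat.add_sub_cancel_left, add_lt_add_iff_left, true_and, false_and, if_false, sum_const_zero,
    add_zero, add_assoc]

lemma getD_mem_of_mem_range {l : List ℕ} {i : ℕ} (hi : i ∈ range l.length) : l.getD i 0 ∈ l := by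
  rw [List.getD_eq_getElem _ _ (mem_range.mp hi)]
  exact List.getElem_mem _

lemma crossCount_add_crossCount {l₁ l₂ : List ℕ} (h : l₁.Disjoint l₂) :
    crossCount l₁ l₂ + crossCount l₂ l₁ = l₁.length * l₂.length := by
  rw [crossCount, crossCount, sum_comm (s := range l₂.length), ← sum_add_distrib]
  calc _ = ∑ _i ∈ range l₁.length, ∑ _j ∈ range l₂.length, 1 := by
        refine sum_congr rfl fun i hi => ?_
        rw [← sum_add_distrib]
        refine sum_congr rfl fun j hj => ?_
        have hne : l₁.getD i 0 ≠ l₂.getD j 0 := fun heq =>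
          h (getD_mem_of_mem_range hi) (heq ▸ getD_mem_of_mem_range hj)
        split_ifs <;> omega
    _ = _ := by simp

lemma listSign_append_comm {l₁ l₂ : List ℕ} (h : l₁.Disjoint l₂) :
    listSign (l₂ ++ l₁) = (-1) ^ (l₁.length * l₂.length) * listSign (l₁ ++ l₂) := by
  rw [listSign_eq_neg_one_pow_invCount, listSign_eq_neg_one_pow_invCount, invCount_append,
    invCount_append, ← crossCount_add_crossCount h, ← pow_add]
  set c := crossCount l₁ l₂
  rw [show c + crossCount l₂ l₁ + (invCount l₁ + c + invCount l₂)
      = invCount l₂ + crossCount l₂ l₁ + invCount l₁ + 2 * c by ring,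
    pow_add _ _ (2 * c), pow_mul, neg_one_sq, one_pow, mul_one]

def rotationSign (n k : ℕ) : ℤ :=
  if Odd n then 1 else (-1) ^ k

lemma neg_one_pow_mul_eq_rotationSign {k l n : ℕ} (h : k + l = n) :
    (-1 : ℤ) ^ (k * l) = rotationSign n k := by
  subst h
  unfold rotationSign
  rcases Nat.even_or_odd k with hk | hk <;> rcases Nat.even_or_odd l with hl | hl
  · rw [if_neg (Nat.not_odd_iff_even.mpr (hk.add hl)), hk.neg_one_pow,
      (hk.mul_right l).neg_one_pow]
  · rw [if_pos (hk.add_odd hl), (hk.mul_right l).neg_one_pow]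
  · rw [if_pos (hk.add_even hl), (hl.mul_left k).neg_one_pow]
  · rw [if_neg (Nat.not_odd_iff_even.mpr (hk.add_odd hl)), hk.neg_one_pow,
      (hk.mul hl).neg_one_pow]

/-- `whiteSign LW S w` and `blackSign LB T b` are, definitionally, `blockSign (LW w) (S (w, ·))`
and `blockSign (LB b) (T (·, b))`. -/
def blockSign {α : Type*} {n : ℕ} (L : List α) (f : α → Finset (Fin n)) : ℤ :=
  listSign (L.flatMap fun a => (Finset.sort (f a) (· ≤ ·)).map Fin.val)

section Blocks

variable {α : Type*} {n : ℕ} {f : α → Finset (Fin n)}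

lemma length_flatMap_sort [Fintype α] [DecidableEq α] {L : List α} (hnd : L.Nodup)
    (hmem : ∀ a, a ∈ L) (hdisj : Pairwise (Disjoint on f)) (hcover : univ.biUnion f = univ) :
    (L.flatMap fun a => (Finset.sort (f a) (· ≤ ·)).map Fin.val).length = n := by
  have huniv : L.toFinset = univ := eq_univ_of_forall fun a => List.mem_toFinset.mpr (hmem a)
  simp only [List.length_flatMap, List.length_map, Finset.length_sort]
  rw [← List.sum_toFinset _ hnd, huniv, ← card_biUnion fun a _ b _ hab => hdisj hab, hcover,
    card_univ, Fintype.card_fin]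

lemma disjoint_sort_flatMap_sort {a : α} {t : List α} (ha : a ∉ t)
    (hdisj : Pairwise (Disjoint on f)) :
    ((Finset.sort (f a) (· ≤ ·)).map Fin.val).Disjoint
      (t.flatMap fun b => (Finset.sort (f b) (· ≤ ·)).map Fin.val) := by
  intro x hx hx'
  simp only [List.mem_flatMap, List.mem_map, Finset.mem_sort] at hx hx'
  obtain ⟨c, hc, rfl⟩ := hx
  obtain ⟨b, hb, c', hc', hcc'⟩ := hx'
  have hba : b ≠ a := fun h => ha (h ▸ hb)
  exact disjoint_left.mp (hdisj hba) hc' (Fin.val_injective hcc' ▸ hc)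

lemma blockSign_rotate [Fintype α] [DecidableEq α] {a : α} {t : List α}
    (hnd : (a :: t).Nodup) (hmem : ∀ b, b ∈ a :: t) (hdisj : Pairwise (Disjoint on f))
    (hcover : univ.biUnion f = univ) :
    blockSign (t ++ [a]) f = rotationSign n (f a).card * blockSign (a :: t) f := by
  have hlen := length_flatMap_sort hnd hmem hdisj hcover
  rw [List.flatMap_cons, List.length_append, List.length_map, Finset.length_sort] at hlen
  rw [blockSign, blockSign, List.flatMap_append, List.flatMap_singleton, List.flatMap_cons,
    listSign_append_comm (disjoint_sort_flatMap_sort (List.nodup_cons.mp hnd).1 hdisj),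
    List.length_map, Finset.length_sort, neg_one_pow_mul_eq_rotationSign hlen]

end Blocks

lemma prod_eq_mul_prod_of_eq_of_ne {V M : Type*} [Fintype V] [DecidableEq V] [CommMonoid M]
    {f g : V → M} (v₀ : V) {c : M} (h₀ : g v₀ = c * f v₀) (h : ∀ v, v ≠ v₀ → g v = f v) :
    ∏ v, g v = c * ∏ v, f v := by
  rw [Fintype.prod_eq_mul_prod_compl v₀, Fintype.prod_eq_mul_prod_compl v₀ f, h₀, mul_assoc,
    prod_congr rfl fun v hv => h v (by simpa using hv)]

lemma prod_blockSign_rotate {V C : Type*} [Fintype V] [DecidableEq V] [Fintype C] [DecidableEq C]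
    {n : ℕ} {L L' : V → List C} {f : V → C → Finset (Fin n)} {v₀ : V} {a : C} {t : List C}
    (hL : L v₀ = a :: t) (hL' : L' v₀ = t ++ [a]) (hne : ∀ v, v ≠ v₀ → L' v = L v)
    (hnd : (L v₀).Nodup) (hmem : ∀ c, c ∈ L v₀) (hdisj : Pairwise (Disjoint on f v₀))
    (hcover : univ.biUnion (f v₀) = univ) :
    ∏ v, blockSign (L' v) (f v) = rotationSign n (f v₀ a).card * ∏ v, blockSign (L v) (f v) := by
  refine prod_eq_mul_prod_of_eq_of_ne v₀ ?_ fun v hv => by rw [hne v hv]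
  rw [hL] at hnd hmem
  rw [hL, hL', blockSign_rotate hnd hmem hdisj hcover]

lemma rotationSign_cast (n k : ℕ) :
    ((rotationSign n k : ℤ) : ℝ) = if Odd n then 1 else (-1 : ℝ) ^ k := by
  unfold rotationSign
  split_ifs <;> push_cast <;> rfl

lemma webTrace_eq_mul_of_sign_eq {W B : Type*} [Fintype W] [Fintype B] [DecidableEq W]
    [DecidableEq B] {n : ℕ} {m : W × B → ℕ} {LW LW' : W → List B} {LB LB' : B → List W}
    (φ : W × B → Matrix (Fin n) (Fin n) ℝ) {ε : ℤ}
    (h : ∀ ST ∈ colorings n m, (∏ w, whiteSign LW' ST.1 w) * ∏ b, blackSign LB' ST.2 b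
      = ε * ((∏ w, whiteSign LW ST.1 w) * ∏ b, blackSign LB ST.2 b)) :
    webTrace n m LW' LB' φ = ε * webTrace n m LW LB φ := by
  simp only [webTrace, mul_sum]
  refine sum_congr rfl fun ST hST => ?_
  rw [h ST hST]
  push_cast
  ring

theorem webTrace_cilium_rotation_general {W B : Type*}
    [Fintype W] [Fintype B] [DecidableEq W] [DecidableEq B]
    (n : ℕ) (m : W × B → ℕ)
    (LW LW' : W → List B) (LB LB' : B → List W)
    (hL : IsOrderData LW LB)
    (φ : W × B → Matrix (Fin n) (Fin n) ℝ) (ε : ℝ)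
    (hrot :
      (∃ (w₀ : W) (b₁ : B) (t : List B),
        LW w₀ = b₁ :: t ∧ LW' w₀ = t ++ [b₁] ∧ (∀ w, w ≠ w₀ → LW' w = LW w) ∧
        LB' = LB ∧ ε = if Odd n then 1 else (-1 : ℝ) ^ (m (w₀, b₁))) ∨
      (∃ (b₀ : B) (w₁ : W) (t : List W),
        LB b₀ = w₁ :: t ∧ LB' b₀ = t ++ [w₁] ∧ (∀ b, b ≠ b₀ → LB' b = LB b) ∧
        LW' = LW ∧ ε = if Odd n then 1 else (-1 : ℝ) ^ (m (w₁, b₀)))) :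
    webTrace n m LW' LB' φ = ε * webTrace n m LW LB φ := by
  rcases hrot with ⟨w₀, b₁, t, hLW, hLW', hLW'_ne, rfl, rfl⟩ |
    ⟨b₀, w₁, t, hLB, hLB', hLB'_ne, rfl, rfl⟩
  · rw [← rotationSign_cast]
    refine webTrace_eq_mul_of_sign_eq φ fun ST hST => ?_
    obtain ⟨hS, -, hSdisj, hScover, -, -⟩ := (mem_filter.mp hST).2
    have hW : ∏ w, whiteSign LW' ST.1 w
        = rotationSign n (m (w₀, b₁)) * ∏ w, whiteSign LW ST.1 w := by
      rw [← hS]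
      exact prod_blockSign_rotate (f := fun w b => ST.1 (w, b)) hLW hLW' hLW'_ne (hL.1 w₀).1
        (hL.1 w₀).2 (hSdisj w₀) (hScover w₀)
    rw [hW, mul_assoc]
  · rw [← rotationSign_cast]
    refine webTrace_eq_mul_of_sign_eq φ fun ST hST => ?_
    obtain ⟨-, hT, -, -, hTdisj, hTcover⟩ := (mem_filter.mp hST).2
    have hB : ∏ b, blackSign LB' ST.2 b
        = rotationSign n (m (w₁, b₀)) * ∏ b, blackSign LB ST.2 b := by
      rw [← hT]
      exact prod_blockSign_rotate (f := fun b w => ST.2 (w, b)) hLB hLB' hLB'_ne (hL.2 b₀).1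
        (hL.2 b₀).2 (hTdisj b₀) (hTcover b₀)
    rw [hB, mul_left_comm]

/-- Proposition 3.4: rotating the cilium at a single vertex `v₀` by one "click" past the
edge `e₁` (so the order `e₁ < e₂ < … < e_k` at `v₀` becomes `e₂ < … < e_k < e₁`)
multiplies the web-trace by `ε`, where `ε = +1` if `n` is odd and `ε = (−1)^{m(e₁)}` if
`n` is even.  The vertex `v₀` may be white or black. -/
theorem webTrace_cilium_rotation {W B : Type*}
    [Fintype W] [Fintype B] [DecidableEq W] [DecidableEq B]
    (n : ℕ) (hn : 1 ≤ n) (m : W × B → ℕ) (hm : IsMultiweb n m)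
    (LW LW' : W → List B) (LB LB' : B → List W)
    (hL : IsOrderData LW LB) (hL' : IsOrderData LW' LB')
    (φ : W × B → Matrix (Fin n) (Fin n) ℝ) (ε : ℝ)
    (hrot :
      (∃ (w₀ : W) (b₁ : B) (t : List B),
        LW w₀ = b₁ :: t ∧ LW' w₀ = t ++ [b₁] ∧ (∀ w, w ≠ w₀ → LW' w = LW w) ∧
        LB' = LB ∧ ε = if Odd n then 1 else (-1 : ℝ) ^ (m (w₀, b₁))) ∨
      (∃ (b₀ : B) (w₁ : W) (t : List W),
        LB b₀ = w₁ :: t ∧ LB' b₀ = t ++ [w₁] ∧ (∀ b, b ≠ b₀ → LB' b = LB b) ∧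
        LW' = LW ∧ ε = if Odd n then 1 else (-1 : ℝ) ^ (m (w₁, b₀)))) :
    webTrace n m LW' LB' φ = ε * webTrace n m LW LB φ :=
  webTrace_cilium_rotation_general n m LW LW' LB LB' hL φ ε hrot
end

section
/- Let m be an n-multiweb on finite vertex sets W, B with ordering data L, and let I denote the identity connection, φ(w,b) = I_n for all (w,b). Then Tr_L(m, I) = Σ over edge-n-colorings of m of ∏_{v∈W∪B} c_v, where an edge-n-coloring is a coloring (S,T) with S(w,b) = T(w,b) for all (w,b). That is, the web-trace of an n-multiweb for the identity connection is the signed number of its edge-n-colorings. -/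
theorem subdet_one_self {n : ℕ} (S : Finset (Fin n)) :
    subdet (1 : Matrix (Fin n) (Fin n) ℝ) S S = 1 := by
  have hminor : (Matrix.of fun i j : Fin S.card =>
      (1 : Matrix (Fin n) (Fin n) ℝ) (S.orderEmbOfFin rfl i) (S.orderEmbOfFin rfl j)) = 1 := by
    ext i j
    simp [Matrix.one_apply, (S.orderEmbOfFin rfl).injective.eq_iff]
  rw [subdet, dif_pos rfl, hminor, Matrix.det_one]

/-- A row indexed by a color of `S \ T` vanishes in the minor `1_{S,T}`. -/
theorem subdet_one_of_ne {n : ℕ} {S T : Finset (Fin n)} (hcard : T.card = S.card)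
    (hne : S ≠ T) : subdet (1 : Matrix (Fin n) (Fin n) ℝ) S T = 0 := by
  obtain ⟨s, hsS, hsT⟩ : ∃ s ∈ S, s ∉ T := by
    by_contra! hsub
    exact hne (Finset.eq_of_subset_of_card_le hsub hcard.le)
  obtain ⟨i, rfl⟩ : ∃ i, S.orderEmbOfFin rfl i = s := by
    rwa [← Set.mem_range, Finset.range_orderEmbOfFin]
  rw [subdet, dif_pos hcard]
  refine Matrix.det_eq_zero_of_row_eq_zero i fun j => ?_
  have hij : S.orderEmbOfFin rfl i ≠ T.orderEmbOfFin hcard j :=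
    fun h => hsT (h ▸ T.orderEmbOfFin_mem hcard j)
  simp [Matrix.one_apply, hij]

theorem prod_subdet_one {ι : Type*} [Fintype ι] {n : ℕ} {S T : ι → Finset (Fin n)}
    (hcard : ∀ i, (T i).card = (S i).card) :
    ∏ i, subdet (1 : Matrix (Fin n) (Fin n) ℝ) (S i) (T i) = if S = T then 1 else 0 := by
  split_ifs with hST
  · subst hST
    exact Finset.prod_eq_one fun i _ => subdet_one_self (S i)
  · obtain ⟨i, hi⟩ := Function.ne_iff.mp hST
    exact Finset.prod_eq_zero (Finset.mem_univ i) (subdet_one_of_ne (hcard i) hi)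

theorem webTrace_identity_connection_general {W B : Type*}
    [Fintype W] [Fintype B] [DecidableEq W] [DecidableEq B]
    (n : ℕ) (m : W × B → ℕ)
    (LW : W → List B) (LB : B → List W) :
    webTrace n m LW LB (fun _ => (1 : Matrix (Fin n) (Fin n) ℝ)) =
      ∑ ST ∈ (colorings n m).filter (fun ST => ST.1 = ST.2),
        (((∏ w, whiteSign LW ST.1 w) * ∏ b, blackSign LB ST.2 b : ℤ) : ℝ) := by
  rw [webTrace, Finset.sum_filter]
  refine Finset.sum_congr rfl fun ST hST => ?_
  obtain ⟨hS, hT, -⟩ := (Finset.mem_filter.mp hST).2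
  rw [prod_subdet_one fun p => (hT p).trans (hS p).symm, mul_ite, mul_one, mul_zero]

/-- Proposition 3.3: the web-trace of an `n`-multiweb for the identity connection is the
signed number of its edge-`n`-colorings, i.e. the sum of the signs `∏_v c_v` over the
colorings `(S,T)` with `S = T`. -/
theorem webTrace_identity_connection {W B : Type*}
    [Fintype W] [Fintype B] [DecidableEq W] [DecidableEq B]
    (n : ℕ) (hn : 1 ≤ n) (m : W × B → ℕ) (hm : IsMultiweb n m)
    (LW : W → List B) (LB : B → List W) (hL : IsOrderData LW LB) :
    webTrace n m LW LB (fun _ => (1 : Matrix (Fin n) (Fin n) ℝ)) =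
      ∑ ST ∈ (colorings n m).filter (fun ST => ST.1 = ST.2),
        (((∏ w, whiteSign LW ST.1 w) * ∏ b, blackSign LB ST.2 b : ℤ) : ℝ) :=
  webTrace_identity_connection_general n m LW LB
end

section
/- Let A, B, C ∈ M₃(ℝ) satisfy det A = det B = det C = 1. Then the coefficient of the monomial xyz in the polynomial det(xA + yB + zC) ∈ ℝ[x,y,z] equals tr(AB⁻¹)·tr(CB⁻¹) − tr(AB⁻¹CB⁻¹), where tr denotes the matrix trace. -/
private lemma coeff_triple (a b c d e f g h i : ℝ) :
    MvPolynomial.coeff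
      (Finsupp.single (0 : Fin 3) 1 + Finsupp.single 1 1 + Finsupp.single 2 1)
      ((MvPolynomial.X (0 : Fin 3) * MvPolynomial.C a + MvPolynomial.X 1 * MvPolynomial.C b +
          MvPolynomial.X 2 * MvPolynomial.C c) *
       (MvPolynomial.X (0 : Fin 3) * MvPolynomial.C d + MvPolynomial.X 1 * MvPolynomial.C e +
          MvPolynomial.X 2 * MvPolynomial.C f) *
       (MvPolynomial.X (0 : Fin 3) * MvPolynomial.C g + MvPolynomial.X 1 * MvPolynomial.C h +
          MvPolynomial.X 2 * MvPolynomial.C i)) =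
    a*e*i + a*f*h + b*d*i + b*f*g + c*d*h + c*e*g := by
  have hm : ∀ (n : Fin 3) (r : ℝ),
      MvPolynomial.X n * MvPolynomial.C r = MvPolynomial.monomial (Finsupp.single n 1) r := by
    intro n r; rw [mul_comm, MvPolynomial.C_mul_X_eq_monomial]
  simp only [hm, add_mul, mul_add, MvPolynomial.monomial_mul, MvPolynomial.coeff_add,
    MvPolynomial.coeff_monomial]
  norm_num (config := { decide := true }) [Finsupp.ext_iff, Fin.forall_fin_succ,
    Finsupp.add_apply, Finsupp.single_apply]
  ring

set_option maxHeartbeats 1000000 in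
private lemma theta_one (M N : Matrix (Fin 3) (Fin 3) ℝ) :
    MvPolynomial.coeff
      (Finsupp.single (0 : Fin 3) 1 + Finsupp.single 1 1 + Finsupp.single 2 1)
      (Matrix.det (Matrix.of fun i j : Fin 3 =>
        MvPolynomial.X (0 : Fin 3) * MvPolynomial.C (M i j) +
        MvPolynomial.X 1 * MvPolynomial.C ((1 : Matrix (Fin 3) (Fin 3) ℝ) i j) +
        MvPolynomial.X 2 * MvPolynomial.C (N i j))) =
    Matrix.trace M * Matrix.trace N - Matrix.trace (M * N) := by
  rw [Matrix.det_fin_three]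
  simp only [Matrix.of_apply, MvPolynomial.coeff_sub, MvPolynomial.coeff_add, coeff_triple]
  simp only [Matrix.one_apply, Matrix.trace_fin_three, Matrix.mul_apply, Fin.sum_univ_three]
  norm_num (config := { decide := true })
  ring

private lemma expand_matrix (P Q R : Matrix (Fin 3) (Fin 3) ℝ) :
    (Matrix.of fun i j : Fin 3 =>
        MvPolynomial.X (0 : Fin 3) * MvPolynomial.C (P i j) +
        MvPolynomial.X 1 * MvPolynomial.C (Q i j) +
        MvPolynomial.X 2 * MvPolynomial.C (R i j)) =
      (MvPolynomial.X (0 : Fin 3) : MvPolynomial (Fin 3) ℝ) • P.map (MvPolynomial.C (σ := Fin 3)) +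
      (MvPolynomial.X (1 : Fin 3) : MvPolynomial (Fin 3) ℝ) • Q.map (MvPolynomial.C (σ := Fin 3)) +
      (MvPolynomial.X (2 : Fin 3) : MvPolynomial (Fin 3) ℝ) • R.map (MvPolynomial.C (σ := Fin 3)) := by
  ext i j
  simp [Matrix.smul_apply, smul_eq_mul, Matrix.map_apply]

/-- The web-trace of the theta graph with `SL₃(ℝ)` parallel transports `A, B, C`:
the coefficient of the monomial `xyz` in `det(xA + yB + zC)` equals
`tr(AB⁻¹)·tr(CB⁻¹) − tr(AB⁻¹CB⁻¹)`. -/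
theorem theta_trace_sl3 (A B C : Matrix (Fin 3) (Fin 3) ℝ)
    (hA : A.det = 1) (hB : B.det = 1) (hC : C.det = 1) :
    MvPolynomial.coeff
      (Finsupp.single (0 : Fin 3) 1 + Finsupp.single 1 1 + Finsupp.single 2 1)
      (Matrix.det (Matrix.of fun i j : Fin 3 =>
        MvPolynomial.X (0 : Fin 3) * MvPolynomial.C (A i j) +
        MvPolynomial.X 1 * MvPolynomial.C (B i j) +
        MvPolynomial.X 2 * MvPolynomial.C (C i j))) =
    Matrix.trace (A * B⁻¹) * Matrix.trace (C * B⁻¹) -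
      Matrix.trace (A * B⁻¹ * C * B⁻¹) := by
  have hBu : IsUnit B.det := by rw [hB]; exact isUnit_one
  have hinv : B⁻¹ * B = 1 := Matrix.nonsing_inv_mul B hBu
  rw [mul_assoc (A * B⁻¹)]
  set M := A * B⁻¹ with hM
  set N := C * B⁻¹ with hN
  have hMB : M * B = A := by rw [hM, mul_assoc, hinv, mul_one]
  have hNB : N * B = C := by rw [hN, mul_assoc, hinv, mul_one]
  have key : ((MvPolynomial.X (0 : Fin 3) : MvPolynomial (Fin 3) ℝ) • A.map (MvPolynomial.C (σ := Fin 3)) +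
      (MvPolynomial.X (1 : Fin 3) : MvPolynomial (Fin 3) ℝ) • B.map (MvPolynomial.C (σ := Fin 3)) +
      (MvPolynomial.X (2 : Fin 3) : MvPolynomial (Fin 3) ℝ) • C.map (MvPolynomial.C (σ := Fin 3))) =
      ((MvPolynomial.X (0 : Fin 3) : MvPolynomial (Fin 3) ℝ) • M.map (MvPolynomial.C (σ := Fin 3)) +
       (MvPolynomial.X (1 : Fin 3) : MvPolynomial (Fin 3) ℝ) • (1 : Matrix (Fin 3) (Fin 3) ℝ).map (MvPolynomial.C (σ := Fin 3)) +
       (MvPolynomial.X (2 : Fin 3) : MvPolynomial (Fin 3) ℝ) • N.map (MvPolynomial.C (σ := Fin 3))) *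
      B.map (MvPolynomial.C (σ := Fin 3)) := by
    rw [add_mul, add_mul, smul_mul_assoc, smul_mul_assoc, smul_mul_assoc,
      ← Matrix.map_mul, ← Matrix.map_mul, ← Matrix.map_mul, hMB, hNB, one_mul]
  have hdetB : (B.map (MvPolynomial.C (σ := Fin 3))).det = 1 := by
    have := (MvPolynomial.C (σ := Fin 3) : ℝ →+* MvPolynomial (Fin 3) ℝ).map_det B
    rw [hB, map_one] at this
    exact this.symm
  rw [expand_matrix, key, Matrix.det_mul, hdetB, mul_one, ← expand_matrix, theta_one]
end

section
/- Let A, B, C, D ∈ M₃(ℝ). Consider the 3-multiweb m on white vertices W = {w₁, w₂} and black vertices B = {b₁, b₂} given by m(w₁,b₁) = 1, m(w₁,b₂) = 2, m(w₂,b₂) = 1, m(w₂,b₁) = 2, with M₃(ℝ)-connection φ(w₁,b₁) = A, φ(w₁,b₂) = B, φ(w₂,b₂) = C, φ(w₂,b₁) = D, and ordering data L given by: at w₁ the edge to b₁ precedes the edge to b₂; at w₂ the edge to b₂ precedes the edge to b₁; at b₁ the edge to w₁ precedes the edge to w₂; at b₂ the edge to w₂ precedes the edge to w₁. Then Tr_L(m,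 φ) = tr(A·adj(D)·C·adj(B)), where adj denotes the adjugate matrix and tr the matrix trace. In particular, if det B = det D = 1 then Tr_L(m, φ) = tr(D⁻¹CB⁻¹A). -/
/-! A coloring of the loop is fixed by the colours `i, j` of the two simple edges at the white
vertices and `k, l` of the two simple edges at the black vertices; each double edge carries the
complementary pair. Every vertex sees the word `x, {x}ᶜ`, whose sign is `(-1)^x`, and the
complementary minor `det M_{{a}ᶜ,{b}ᶜ}` is the cofactor `(-1)^(a+b) adj(M)_{b a}`. These signs
cancel, so the web-trace is `∑ A_{ik} adj(D)_{kj} C_{jl} adj(B)_{li} = tr(A adj(D) C adj(B))`. -/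

open Finset

variable {n : ℕ}

def inversions (l : List ℕ) : ℕ :=
  ((range l.length ×ˢ range l.length).filter
    (fun p => p.1 < p.2 ∧ l.getD p.2 0 < l.getD p.1 0)).card

theorem listSign_eq_neg_one_pow_inversions (l : List ℕ) :
    listSign l = (-1) ^ inversions l := rfl

theorem sum_range_length_ite_eq_countP (p : ℕ → Bool) (l : List ℕ) :
    ∑ q ∈ range l.length, (if p (l.getD q 0) then 1 else 0) = l.countP p := by
  induction l with
  | nil => simp
  | cons b l ih =>
    rw [List.length_cons, sum_range_succ', List.countP_cons, ← ih]
    simp [add_comm]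

theorem inversions_cons (a : ℕ) (l : List ℕ) :
    inversions (a :: l) = l.countP (· < a) + inversions l := by
  simp only [inversions, card_filter, sum_product, List.length_cons, sum_range_succ',
    List.getD_cons_succ, List.getD_cons_zero]
  simp [← sum_range_length_ite_eq_countP, add_comm]

theorem inversions_eq_zero_of_pairwise {l : List ℕ} (h : l.Pairwise (· < ·)) :
    inversions l = 0 := by
  induction h with
  | nil => rfl
  | cons hlt _ ih =>
    rw [inversions_cons, ih, List.countP_eq_zero.mpr fun b hb => by simpa using (hlt b hb).le]

theorem listSign_cons_of_pairwise (a : ℕ) {l : List ℕ} (h : l.Pairwise (· < ·)) :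
    listSign (a :: l) = (-1) ^ l.countP (· < a) := by
  rw [listSign_eq_neg_one_pow_inversions, inversions_cons, inversions_eq_zero_of_pairwise h,
    add_zero]

theorem countP_map_val_sort_lt (s : Finset (Fin n)) (a : Fin n) :
    ((s.sort).map Fin.val).countP (· < (a : ℕ)) = (s.filter (· < a)).card := by
  rw [card_def, filter_val, ← Multiset.countP_eq_card_filter, ← sort_eq s (· ≤ ·),
    Multiset.coe_countP, List.countP_map]
  rfl

theorem listSign_cons_sort_compl_singleton (i : Fin n) :
    listSign ((i : ℕ) :: ({i}ᶜ : Finset (Fin n)).sort.map Fin.val) = (-1) ^ (i : ℕ) := by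
  have hsorted : (({i}ᶜ : Finset (Fin n)).sort.map Fin.val).Pairwise (· < ·) :=
    List.pairwise_map.mpr (sortedLT_sort _).pairwise
  have hfilter : ({i}ᶜ : Finset (Fin n)).filter (· < i) = Iio i := by
    ext x; simp [lt_iff_le_and_ne]
  rw [listSign_cons_of_pairwise _ hsorted, countP_map_val_sort_lt, hfilter, Fin.card_Iio]

theorem subdet_eq_det_submatrix {k : ℕ} (M : Matrix (Fin n) (Fin n) ℝ) {S T : Finset (Fin n)}
    (hS : S.card = k) (hT : T.card = k) :
    subdet M S T = (M.submatrix (S.orderEmbOfFin hS) (T.orderEmbOfFin hT)).det := by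
  subst hS
  rw [subdet, dif_pos hT]
  rfl

theorem subdet_singleton (M : Matrix (Fin n) (Fin n) ℝ) (i j : Fin n) :
    subdet M {i} {j} = M i j := by
  rw [subdet_eq_det_submatrix M (card_singleton i) (card_singleton j), Matrix.det_unique]
  simp

theorem subdet_compl_singleton (M : Matrix (Fin (n + 1)) (Fin (n + 1)) ℝ) (i j : Fin (n + 1)) :
    subdet M {i}ᶜ {j}ᶜ = (-1) ^ (i + j : ℕ) * M.adjugate j i := by
  rw [subdet_eq_det_submatrix M (k := n) (by simp [card_compl]) (by simp [card_compl]),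
    orderEmbOfFin_compl_singleton_eq_succAboveOrderEmb,
    orderEmbOfFin_compl_singleton_eq_succAboveOrderEmb,
    Matrix.adjugate_fin_succ_eq_det_submatrix, ← mul_assoc, ← pow_add,
    Even.neg_one_pow ⟨_, rfl⟩, one_mul]
  rfl

theorem isCompl_iff_pairwise_disjoint_and_biUnion_eq_univ {α : Type*} [Fintype α]
    [DecidableEq α] (f : Fin 2 → Finset α) :
    IsCompl (f 0) (f 1) ↔
      (∀ b b', b ≠ b' → Disjoint (f b) (f b')) ∧ univ.biUnion f = univ := by
  rw [isCompl_iff, codisjoint_iff]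
  simp [Fin.forall_fin_two, Fin.univ_succ, disjoint_comm]

theorem mem_colorings_fin_two {m : Fin 2 × Fin 2 → ℕ}
    {ST : (Fin 2 × Fin 2 → Finset (Fin n)) × (Fin 2 × Fin 2 → Finset (Fin n))} :
    ST ∈ colorings n m ↔ (∀ p, (ST.1 p).card = m p) ∧ (∀ p, (ST.2 p).card = m p) ∧
      (∀ w, IsCompl (ST.1 (w, 0)) (ST.1 (w, 1))) ∧
      ∀ b, IsCompl (ST.2 (0, b)) (ST.2 (1, b)) := by
  have hS w := isCompl_iff_pairwise_disjoint_and_biUnion_eq_univ fun b => ST.1 (w, b)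
  have hT b := isCompl_iff_pairwise_disjoint_and_biUnion_eq_univ fun w => ST.2 (w, b)
  simp only [colorings, mem_filter, mem_univ, true_and, hS, hT, forall_and]
  tauto

theorem card_eq_one_and_isCompl_iff {s t : Finset (Fin (n + 1))} :
    (s.card = 1 ∧ t.card = n ∧ IsCompl s t) ↔ ∃ i, s = {i} ∧ t = {i}ᶜ := by
  constructor
  · rintro ⟨hs, -, hst⟩
    obtain ⟨i, rfl⟩ := card_eq_one.mp hs
    exact ⟨i, rfl, hst.compl_eq.symm⟩
  · rintro ⟨i, rfl, rfl⟩
    exact ⟨card_singleton i, by simp [card_compl], isCompl_compl⟩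

-- Written like the data of `webTrace_four_cycle`, which is the case `n = 2` up to unfolding.
def fourCycleWeb (n : ℕ) (p : Fin 2 × Fin 2) : ℕ :=
  if p = (0, 0) then 1 else if p = (0, 1) then n else if p = (1, 1) then 1 else n

def fourCycleOrder : Fin 2 → List (Fin 2) := ![[0, 1], [1, 0]]

def fourCycleConnection (A B C D : Matrix (Fin n) (Fin n) ℝ) (p : Fin 2 × Fin 2) :
    Matrix (Fin n) (Fin n) ℝ :=
  if p = (0, 0) then A else if p = (0, 1) then B else if p = (1, 1) then C else D

def fourCycleColoring :
    Fin n × Fin n × Fin n × Fin n →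
      (Fin 2 × Fin 2 → Finset (Fin n)) × (Fin 2 × Fin 2 → Finset (Fin n))
  | (i, j, k, l) =>
    (fun p => ![![{i}, {i}ᶜ], ![{j}ᶜ, {j}]] p.1 p.2,
     fun p => ![![{k}, {l}ᶜ], ![{k}ᶜ, {l}]] p.1 p.2)

theorem fourCycleColoring_injective : Function.Injective (fourCycleColoring (n := n)) := by
  rintro ⟨i, j, k, l⟩ ⟨i', j', k', l'⟩ h
  have := congr_arg (fun ST => (ST.1 (0, 0), ST.1 (1, 1), ST.2 (0, 0), ST.2 (1, 1))) h
  simpa [fourCycleColoring] using this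

theorem colorings_fourCycleWeb :
    colorings (n + 1) (fourCycleWeb n) = univ.image fourCycleColoring := by
  ext ST
  rw [mem_colorings_fin_two, mem_image]
  constructor
  · rintro ⟨hS, hT, hW, hB⟩
    obtain ⟨i, hi, hi'⟩ := card_eq_one_and_isCompl_iff.1 ⟨hS (0, 0), hS (0, 1), hW 0⟩
    obtain ⟨j, hj, hj'⟩ := card_eq_one_and_isCompl_iff.1 ⟨hS (1, 1), hS (1, 0), (hW 1).symm⟩
    obtain ⟨k, hk, hk'⟩ := card_eq_one_and_isCompl_iff.1 ⟨hT (0, 0), hT (1, 0), hB 0⟩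
    obtain ⟨l, hl, hl'⟩ := card_eq_one_and_isCompl_iff.1 ⟨hT (1, 1), hT (0, 1), (hB 1).symm⟩
    refine ⟨(i, j, k, l), mem_univ _, Prod.ext (funext ?_) (funext ?_)⟩ <;>
      rintro ⟨w, b⟩ <;> fin_cases w <;> fin_cases b <;> simp [fourCycleColoring, *]
  · rintro ⟨⟨i, j, k, l⟩, -, rfl⟩
    refine ⟨?_, ?_, ?_, ?_⟩ <;>
      simp [Prod.forall, Fin.forall_fin_two, fourCycleColoring, fourCycleWeb, card_compl,
        isCompl_compl, isCompl_compl.symm]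

theorem fourCycleColoring_sign (i j k l : Fin n) :
    (∏ w, whiteSign fourCycleOrder (fourCycleColoring (i, j, k, l)).1 w) *
      ∏ b, blackSign fourCycleOrder (fourCycleColoring (i, j, k, l)).2 b =
      (-1) ^ (i + j + k + l : ℕ) := by
  simp only [Fin.prod_univ_two, whiteSign, blackSign, fourCycleOrder, fourCycleColoring]
  simp [listSign_cons_sort_compl_singleton]
  ring

theorem fourCycleColoring_prod_subdet (A B C D : Matrix (Fin (n + 1)) (Fin (n + 1)) ℝ)
    (i j k l : Fin (n + 1)) :
    ∏ p, subdet (fourCycleConnection A B C D p) ((fourCycleColoring (i, j, k, l)).1 p)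
      ((fourCycleColoring (i, j, k, l)).2 p) =
      (-1) ^ (i + j + k + l : ℕ) * (A i k * D.adjugate k j * C j l * B.adjugate l i) := by
  simp [Fintype.prod_prod_type, Fin.prod_univ_two, fourCycleConnection, fourCycleColoring,
    subdet_singleton, subdet_compl_singleton]
  ring

theorem fourCycleColoring_summand (A B C D : Matrix (Fin (n + 1)) (Fin (n + 1)) ℝ)
    (i j k l : Fin (n + 1)) :
    (((∏ w, whiteSign fourCycleOrder (fourCycleColoring (i, j, k, l)).1 w) *
      ∏ b, blackSign fourCycleOrder (fourCycleColoring (i, j, k, l)).2 b : ℤ) : ℝ) *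
      ∏ p, subdet (fourCycleConnection A B C D p) ((fourCycleColoring (i, j, k, l)).1 p)
        ((fourCycleColoring (i, j, k, l)).2 p) =
      A i k * D.adjugate k j * C j l * B.adjugate l i := by
  rw [fourCycleColoring_sign, fourCycleColoring_prod_subdet, Int.cast_pow, Int.cast_neg,
    Int.cast_one, ← mul_assoc, ← pow_add, Even.neg_one_pow ⟨_, rfl⟩, one_mul]

theorem Matrix.trace_mul_mul_mul_eq_sum {ι R : Type*} [Fintype ι] [CommSemiring R]
    (A B C D : Matrix ι ι R) :
    (A * B * C * D).trace = ∑ i, ∑ j, ∑ k, ∑ l, A i j * B j k * C k l * D l i := by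
  simp only [Matrix.trace, Matrix.diag, Matrix.mul_apply, sum_mul]
  refine sum_congr rfl fun i _ => ?_
  rw [sum_comm]
  refine (sum_congr rfl fun k _ => sum_comm).trans ?_
  rw [sum_comm]

theorem webTrace_fourCycleWeb (A B C D : Matrix (Fin (n + 1)) (Fin (n + 1)) ℝ) :
    webTrace (n + 1) (fourCycleWeb n) fourCycleOrder fourCycleOrder
      (fourCycleConnection A B C D) = (A * D.adjugate * C * B.adjugate).trace := by
  rw [webTrace, colorings_fourCycleWeb, sum_image fourCycleColoring_injective.injOn,
    Matrix.trace_mul_mul_mul_eq_sum]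
  simp only [Fintype.sum_prod_type, fourCycleColoring_summand]
  exact sum_congr rfl fun i _ => sum_comm

/-- The 4-cycle loop computation (Section 3.7.2): the 3-multiweb on white vertices
`w₁, w₂` and black vertices `b₁, b₂` with `m(w₁,b₁) = 1`, `m(w₁,b₂) = 2`, `m(w₂,b₂) = 1`,
`m(w₂,b₁) = 2` (here `w₁ = b₁ = 0`, `w₂ = b₂ = 1` in `Fin 2`), connection
`φ(w₁,b₁) = A`, `φ(w₁,b₂) = B`, `φ(w₂,b₂) = C`, `φ(w₂,b₁) = D`, and the indicated
ordering data, has web-trace `tr(A·adj(D)·C·adj(B))`; in particular if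
`det B = det D = 1` the web-trace is `tr(D⁻¹CB⁻¹A)`. -/
theorem webTrace_four_cycle (A B C D : Matrix (Fin 3) (Fin 3) ℝ) :
    webTrace 3
      (fun p : Fin 2 × Fin 2 =>
        if p = (0, 0) then 1 else if p = (0, 1) then 2 else if p = (1, 1) then 1 else 2)
      (![[0, 1], [1, 0]]) (![[0, 1], [1, 0]])
      (fun p : Fin 2 × Fin 2 =>
        if p = (0, 0) then A else if p = (0, 1) then B else if p = (1, 1) then C else D) =
      Matrix.trace (A * D.adjugate * C * B.adjugate) ∧
    (B.det = 1 → D.det = 1 →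
      webTrace 3
        (fun p : Fin 2 × Fin 2 =>
          if p = (0, 0) then 1 else if p = (0, 1) then 2 else if p = (1, 1) then 1 else 2)
        (![[0, 1], [1, 0]]) (![[0, 1], [1, 0]])
        (fun p : Fin 2 × Fin 2 =>
          if p = (0, 0) then A else if p = (0, 1) then B else if p = (1, 1) then C else D) =
        Matrix.trace (D⁻¹ * C * B⁻¹ * A)) := by
  have hloop := webTrace_fourCycleWeb A B C D
  refine ⟨hloop, fun hB hD => hloop.trans ?_⟩
  rw [Matrix.inv_def, Matrix.inv_def, hB, hD, Ring.inverse_one, one_smul, one_smul,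
    Matrix.mul_assoc, Matrix.mul_assoc, Matrix.trace_mul_comm]
  simp only [Matrix.mul_assoc]
end

section
/- Let m ≥ 1 be odd, let n ≥ 2 be even, and let ζ ∈ ℂ with ζ ≠ 0; set z = ζ^{2m}. Define the matrix K̂ ∈ M_{2mn}(ℂ), indexed by pairs (x,y) with x ∈ ℤ/2mℤ and y ∈ {1,…,n}, by K̂((x,y),(x',y')) = ζ·[x'=x+1][y'=y] + ζ⁻¹·[x'=x−1][y'=y] + i·[x'=x]·([y'=y+1] + [y'=y−1]), where [·] is 1 if the condition holds and 0 otherwise, and i is the imaginary unit. Then det K̂ = ∏_{k=1}^{n/2} ((z + α_k^{2m})·(z + α_k^{−2m}))² / z², where α_k = −cos(πk/(n+1)) + √(1 + cos²(πk/(n+1))). -/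
/-!
`K̂` is the Kronecker sum `C ⊗ 1 + 1 ⊗ iA` of the twisted cycle `C` on `ℤ/2m` (weight `ζ` forward,
`ζ⁻¹` backward) and `i` times the adjacency matrix `A` of the path on `n` vertices. The discrete
Fourier matrix diagonalizes `C` with eigenvalues `w_j + w_j⁻¹`, `w_j = ζω^j`, and the sine matrix
diagonalizes `A` with eigenvalues `2 cos(πk/(n+1))`, so `det K̂` is the product over `j, k` of
`w_j + w_j⁻¹ + 2i cos(πk/(n+1))`. For fixed `k`, `2i cos(πk/(n+1)) = -(u + v)` with `u = iα_k` and
`v = -iα_k⁻¹`; then `w + w⁻¹ - (u + v) = (u - w)(v - w)/w` and `∏_j (x - w_j) = x^{2m} - z` turn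
the product over `j` into `-(z + α_k^{2m})(z + α_k^{-2m})/z`, using `i^{2m} = -1` for odd `m`.
Finally `k ↦ n + 1 - k` sends `α_k` to `α_k⁻¹`, so these factors pair up into squares.
-/

open Matrix Finset Polynomial SimpleGraph
open scoped Kronecker

namespace Matrix

variable {R : Type*} [CommRing R] {m n : Type*} [Fintype m] [Fintype n] [DecidableEq m]
  [DecidableEq n]

theorem kronecker_one_add_one_kronecker_mul_kronecker {A P : Matrix m m R} {B Q : Matrix n n R}
    {a : m → R} {b : n → R} (hA : A * P = P * diagonal a) (hB : B * Q = Q * diagonal b) :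
    (A ⊗ₖ (1 : Matrix n n R) + (1 : Matrix m m R) ⊗ₖ B) * (P ⊗ₖ Q) =
      (P ⊗ₖ Q) * diagonal fun p => a p.1 + b p.2 := by
  have hdiag : (diagonal fun p : m × n => a p.1 + b p.2) =
      diagonal a ⊗ₖ (1 : Matrix n n R) + (1 : Matrix m m R) ⊗ₖ diagonal b := by
    rw [← diagonal_one, diagonal_kronecker_diagonal, ← diagonal_one,
      diagonal_kronecker_diagonal, diagonal_add]
    simp
  rw [hdiag, add_mul, mul_add, ← mul_kronecker_mul, ← mul_kronecker_mul, ← mul_kronecker_mul,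
    ← mul_kronecker_mul, hA, hB, Matrix.one_mul, Matrix.one_mul, Matrix.mul_one, Matrix.mul_one]

theorem det_kronecker_one_add_one_kronecker {A P : Matrix m m R} {B Q : Matrix n n R}
    {a : m → R} {b : n → R} (hA : A * P = P * diagonal a) (hB : B * Q = Q * diagonal b)
    (hP : IsUnit P.det) (hQ : IsUnit Q.det) :
    (A ⊗ₖ (1 : Matrix n n R) + (1 : Matrix m m R) ⊗ₖ B).det = ∏ i, ∏ j, (a i + b j) := by
  have hPQ : IsUnit (P ⊗ₖ Q).det := by
    rw [det_kronecker]
    exact (hP.pow _).mul (hQ.pow _)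
  have h := congrArg det (kronecker_one_add_one_kronecker_mul_kronecker hA hB)
  rw [det_mul, det_mul, det_diagonal, mul_comm] at h
  rw [hPQ.mul_left_cancel h, Fintype.prod_prod_type]

theorem isUnit_det_of_mul_eq_mul_diagonal {K : Type*} [Field K] {B Q : Matrix n n K}
    {b : n → K} (hBQ : B * Q = Q * diagonal b) (hb : Function.Injective b)
    (hQ : ∀ k, Q.col k ≠ 0) : IsUnit Q.det := by
  rw [← isUnit_iff_isUnit_det, ← linearIndependent_cols_iff_isUnit]
  refine Module.End.eigenvectors_linearIndependent' (mulVecLin B) b hb _ fun k => ⟨?_, hQ k⟩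
  rw [Module.End.mem_eigenspace_iff, mulVecLin_apply]
  ext i
  simpa [← mul_apply, mul_diagonal, mulVec, dotProduct, mul_comm] using congrFun (congrFun hBQ i) k

end Matrix

namespace ZMod

variable {N : ℕ} [NeZero N]

theorem pow_val_eq_pow_of_natCast_eq {M : Type*} [Monoid M] {η : M} (hη : η ^ N = 1)
    {x : ZMod N} {k : ℕ} (hk : (k : ZMod N) = x) : η ^ x.val = η ^ k :=
  pow_eq_pow_of_modEq ((natCast_eq_natCast_iff _ _ _).1 (by simp [hk])) hη

theorem prod_comp_val {M : Type*} [CommMonoid M] (f : ℕ → M) :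
    ∏ j : ZMod N, f j.val = ∏ i ∈ range N, f i := by
  refine prod_nbij val (fun j _ => mem_range.2 j.val_lt)
    (fun j _ j' _ h => val_injective N h) (fun i hi => ?_) (fun _ _ => rfl)
  exact ⟨i, mem_coe.2 (mem_univ _), val_cast_of_lt (mem_range.1 hi)⟩

end ZMod

section Fourier

variable {K : Type*} [Field K]

def twistedCycle (N : ℕ) (ζ : K) : Matrix (ZMod N) (ZMod N) K :=
  of fun x x' => (if x' = x + 1 then ζ else 0) + (if x' = x - 1 then ζ⁻¹ else 0)

def fourierMatrix (N : ℕ) (ω : K) : Matrix (ZMod N) (ZMod N) K :=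
  of fun x j => ω ^ (x.val * j.val)

variable {N : ℕ} [NeZero N]

theorem twistedCycle_mul_fourierMatrix {ω : K} (hω : IsPrimitiveRoot ω N) (ζ : K) :
    twistedCycle N ζ * fourierMatrix N ω =
      fourierMatrix N ω * diagonal fun j => ζ * ω ^ j.val + (ζ * ω ^ j.val)⁻¹ := by
  ext x j
  have hη : (ω ^ j.val) ^ N = 1 := by rw [← pow_mul, mul_comm, pow_mul, hω.pow_eq_one, one_pow]
  have hη0 : ω ^ j.val ≠ 0 := pow_ne_zero _ (hω.ne_zero (NeZero.ne N))
  have hsucc : (ω ^ j.val) ^ (x + 1).val = (ω ^ j.val) ^ x.val * ω ^ j.val := by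
    rw [ZMod.pow_val_eq_pow_of_natCast_eq hη (k := x.val + 1) (by simp), pow_succ]
  have hpred : (ω ^ j.val) ^ (x - 1).val = (ω ^ j.val) ^ x.val * (ω ^ j.val)⁻¹ := by
    rw [eq_mul_inv_iff_mul_eq₀ hη0, ← pow_succ,
      ZMod.pow_val_eq_pow_of_natCast_eq hη (x := x) (k := (x - 1).val + 1) (by simp)]
  rw [mul_diagonal, mul_apply]
  simp only [twistedCycle, fourierMatrix, of_apply, add_mul, ite_mul, zero_mul, sum_add_distrib,
    sum_ite_eq', mem_univ, if_true, pow_mul']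
  rw [hsucc, hpred, mul_inv]
  ring

theorem isUnit_det_fourierMatrix {ω : K} (hω : IsPrimitiveRoot ω N) :
    IsUnit (fourierMatrix N ω).det := by
  let e : Fin N ≃ ZMod N :=
    { toFun := fun i => i.val
      invFun := fun x => ⟨x.val, x.val_lt⟩
      left_inv := fun i => Fin.ext (ZMod.val_cast_of_lt i.isLt)
      right_inv := fun x => ZMod.natCast_zmod_val x }
  have hval (i : Fin N) : (e i).val = i := ZMod.val_cast_of_lt i.isLt
  have hvdm : (fourierMatrix N ω).submatrix e e = vandermonde fun i => ω ^ (i : ℕ) := by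
    ext i j
    simp [fourierMatrix, vandermonde, hval, pow_mul]
  rw [← det_submatrix_equiv_self e, hvdm, isUnit_iff_ne_zero, det_vandermonde_ne_zero_iff]
  exact fun i j h => Fin.ext (hω.pow_inj i.isLt j.isLt h)

end Fourier

section Path

variable {R : Type*} [NonAssocSemiring R] {n : ℕ} [DecidableRel (pathGraph n).Adj]

theorem adjMatrix_pathGraph_apply (y y' : Fin n) :
    (pathGraph n).adjMatrix R y y' =
      (if (y' : ℕ) = y + 1 then 1 else 0) + (if (y : ℕ) = y' + 1 then 1 else 0) := by
  rw [adjMatrix_apply]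
  split_ifs with h <;> simp only [pathGraph_adj] at h <;> first | (exfalso; omega) | simp

theorem adjMatrix_pathGraph_mulVec {f : ℕ → R} (h0 : f 0 = 0) (hn : f (n + 1) = 0) (y : Fin n) :
    ((pathGraph n).adjMatrix R *ᵥ fun y' => f (y' + 1)) y = f (y + 2) + f y := by
  simp only [mulVec, dotProduct, adjMatrix_pathGraph_apply, add_mul, ite_mul, one_mul, zero_mul,
    sum_add_distrib]
  rw [Fin.sum_univ_eq_sum_range (fun i => if i = (y : ℕ) + 1 then f (i + 1) else 0),
    Fin.sum_univ_eq_sum_range (fun i => if (y : ℕ) = i + 1 then f (i + 1) else 0),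
    sum_ite_eq']
  have hlower : ∑ i ∈ range n, (if (y : ℕ) = i + 1 then f (i + 1) else 0) = f y := by
    have h := sum_range_succ' (fun i => if (y : ℕ) = i then f i else 0) n
    rw [sum_ite_eq, if_pos (mem_range.2 (by omega)), h0, ite_self, add_zero] at h
    exact h.symm
  rw [hlower]
  split_ifs with h
  · rfl
  · rw [mem_range] at h
    rw [show (y : ℕ) + 2 = n + 1 by omega, hn]

end Path

noncomputable def pathAngle (n k : ℕ) : ℝ := Real.pi * k / (n + 1)

theorem pathAngle_mem_Ioo {n k : ℕ} (hk : 0 < k) (hkn : k ≤ n) :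
    pathAngle n k ∈ Set.Ioo 0 Real.pi := by
  have hkn' : (k : ℝ) < n + 1 := by exact_mod_cast Nat.lt_succ_of_le hkn
  constructor
  · unfold pathAngle
    positivity
  · rw [pathAngle, div_lt_iff₀ (by positivity)]
    nlinarith [Real.pi_pos]

theorem cos_pathAngle_sub {n k : ℕ} (hk : k < n) :
    Real.cos (pathAngle n (n - k)) = -Real.cos (pathAngle n (k + 1)) := by
  rw [← Real.cos_pi_sub, pathAngle, pathAngle, Nat.cast_sub hk.le]
  congr 1
  field_simp
  push_cast
  ring

noncomputable def sineMatrix (n : ℕ) : Matrix (Fin n) (Fin n) ℂ :=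
  of fun y k => (Real.sin (pathAngle n (k + 1) * ((y + 1 : ℕ) : ℝ)) : ℂ)

theorem adjMatrix_pathGraph_mul_sineMatrix {n : ℕ} [DecidableRel (pathGraph n).Adj] :
    (pathGraph n).adjMatrix ℂ * sineMatrix n =
      sineMatrix n * diagonal fun k : Fin n => ((2 * Real.cos (pathAngle n (k + 1)) : ℝ) : ℂ) := by
  ext y k
  rw [mul_apply, mul_diagonal]
  simp only [sineMatrix, of_apply]
  set θ := pathAngle n (k + 1)
  have hn : Real.sin (θ * ((n + 1 : ℕ) : ℝ)) = 0 := by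
    rw [show θ * ((n + 1 : ℕ) : ℝ) = ((k + 1 : ℕ) : ℝ) * Real.pi by
      simp only [θ, pathAngle]; push_cast; field_simp]
    exact Real.sin_nat_mul_pi _
  have h := adjMatrix_pathGraph_mulVec (f := fun t => (Real.sin (θ * t) : ℂ)) (by simp)
    (by simp only [hn, Complex.ofReal_zero]) y
  simp only [mulVec, dotProduct] at h
  rw [h, ← Complex.ofReal_add, ← Complex.ofReal_mul]
  congr 1
  push_cast
  rw [show θ * ((y : ℝ) + 2) = θ * (y + 1) + θ by ring, show θ * (y : ℝ) = θ * (y + 1) - θ by ring,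
    Real.sin_add, Real.sin_sub]
  ring

theorem isUnit_det_sineMatrix (n : ℕ) : IsUnit (sineMatrix n).det := by
  classical
  have hangle (k : Fin n) : pathAngle n (k + 1) ∈ Set.Ioo 0 Real.pi :=
    pathAngle_mem_Ioo k.val.succ_pos k.isLt
  refine isUnit_det_of_mul_eq_mul_diagonal adjMatrix_pathGraph_mul_sineMatrix ?_ fun k hk => ?_
  · intro k k' h
    have hcos := (mul_right_inj' two_ne_zero).1 (Complex.ofReal_injective h)
    have h' := Real.injOn_cos (Set.Ioo_subset_Icc_self (hangle k))
      (Set.Ioo_subset_Icc_self (hangle k')) hcos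
    rw [pathAngle, pathAngle, div_left_inj' (by positivity), mul_right_inj' Real.pi_ne_zero,
      Nat.cast_inj] at h'
    exact Fin.ext (Nat.succ_injective h')
  · have h0 : Real.sin (pathAngle n (k + 1) * ((0 + 1 : ℕ) : ℝ)) = 0 :=
      Complex.ofReal_eq_zero.1 (congrFun hk ⟨0, k.pos⟩)
    rw [zero_add, Nat.cast_one, mul_one] at h0
    exact (Real.sin_pos_of_pos_of_lt_pi (hangle k).1 (hangle k).2).ne' h0

theorem IsPrimitiveRoot.prod_range_add_inv_sub {K : Type*} [Field K] {N : ℕ} {ω : K}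
    (hω : IsPrimitiveRoot ω N) (hN : Even N) (hN0 : N ≠ 0) {ζ u v : K} (hζ : ζ ≠ 0)
    (huv : u * v = 1) :
    ∏ i ∈ range N, (ζ * ω ^ i + (ζ * ω ^ i)⁻¹ - (u + v)) =
      -((u ^ N - ζ ^ N) * (v ^ N - ζ ^ N)) / ζ ^ N := by
  have hroots (x : K) : ∏ i ∈ range N, (x - ζ * ω ^ i) = x ^ N - ζ ^ N := by
    simpa [eval_prod, mul_comm] using
      (congrArg (eval x) (X_pow_sub_C_eq_prod hω (Nat.pos_of_ne_zero hN0) rfl)).symm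
  have hprod : ∏ i ∈ range N, (ζ * ω ^ i) = -ζ ^ N := by
    have h := hroots 0
    simp only [zero_sub, prod_neg, card_range, hN.neg_one_pow, one_mul, zero_pow hN0] at h
    exact h
  have hfactor (i : ℕ) : ζ * ω ^ i + (ζ * ω ^ i)⁻¹ - (u + v) =
      (u - ζ * ω ^ i) * (v - ζ * ω ^ i) / (ζ * ω ^ i) := by
    have hw : ζ * ω ^ i ≠ 0 := mul_ne_zero hζ (pow_ne_zero _ (hω.ne_zero hN0))
    generalize ζ * ω ^ i = w at hw ⊢
    field_simp
    linear_combination -huv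
  rw [prod_congr rfl fun i _ => hfactor i, prod_div_distrib, prod_mul_distrib, hroots, hroots,
    hprod, div_neg, neg_div]

noncomputable def kasteleynAlpha (c : ℝ) : ℝ := -c + √(1 + c ^ 2)

theorem kasteleynAlpha_mul_neg (c : ℝ) : kasteleynAlpha c * kasteleynAlpha (-c) = 1 := by
  have h := Real.sq_sqrt (show (0 : ℝ) ≤ 1 + c ^ 2 by positivity)
  simp only [kasteleynAlpha, neg_neg, neg_sq]
  linear_combination h

theorem kasteleynAlpha_neg (c : ℝ) : kasteleynAlpha (-c) = (kasteleynAlpha c)⁻¹ :=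
  eq_inv_of_mul_eq_one_right (kasteleynAlpha_mul_neg c)

theorem IsPrimitiveRoot.prod_range_add_inv_add_I_mul {m : ℕ} {ω : ℂ}
    (hω : IsPrimitiveRoot ω (2 * m)) (hm : Odd m) {ζ : ℂ} (hζ : ζ ≠ 0) (c : ℝ) :
    ∏ i ∈ range (2 * m), (ζ * ω ^ i + (ζ * ω ^ i)⁻¹ + Complex.I * (2 * c)) =
      -((ζ ^ (2 * m) + (kasteleynAlpha c : ℂ) ^ (2 * m)) *
        (ζ ^ (2 * m) + ((kasteleynAlpha c : ℂ) ^ (2 * m))⁻¹)) / ζ ^ (2 * m) := by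
  have ha : (kasteleynAlpha c : ℂ) * kasteleynAlpha (-c) = 1 := by
    exact_mod_cast kasteleynAlpha_mul_neg c
  have hdiff : Complex.I * (2 * c) =
      -(Complex.I * kasteleynAlpha c + -Complex.I * kasteleynAlpha (-c)) := by
    simp only [kasteleynAlpha, neg_sq]
    push_cast
    ring
  have hI : Complex.I ^ (2 * m) = -1 := by rw [pow_mul, Complex.I_sq, hm.neg_one_pow]
  have hI' : (-Complex.I) ^ (2 * m) = -1 := by rw [pow_mul, neg_sq, Complex.I_sq, hm.neg_one_pow]
  simp only [hdiff, ← sub_eq_add_neg]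
  rw [hω.prod_range_add_inv_sub (even_two_mul m)
      (mul_ne_zero two_ne_zero hm.pos.ne') hζ
      (by linear_combination (-((kasteleynAlpha c : ℂ) * kasteleynAlpha (-c))) * Complex.I_sq + ha),
    mul_pow, mul_pow, hI, hI', ← inv_pow, (eq_inv_of_mul_eq_one_right ha).symm]
  ring

theorem prod_fin_succ_eq_prod_Icc_half_sq {M : Type*} [CommMonoid M] {n : ℕ} (hn : Even n)
    (f : ℕ → M) (hf : ∀ k < n, f (n - k) = f (k + 1)) :
    ∏ k : Fin n, f (k + 1) = ∏ k ∈ Icc 1 (n / 2), f k ^ 2 := by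
  obtain ⟨h, rfl⟩ := hn
  have hupper : ∏ k ∈ range h, f (h + k + 1) = ∏ k ∈ range h, f (k + 1) := by
    rw [← prod_range_reflect]
    refine prod_congr rfl fun k hk => ?_
    have hk := mem_range.1 hk
    rw [show h + (h - 1 - k) + 1 = h + h - k by omega, hf k (by omega)]
  rw [Fin.prod_univ_eq_prod_range (fun k => f (k + 1)), prod_range_add, hupper, ← sq, ← prod_pow,
    show (h + h) / 2 = h by omega, range_eq_Ico, prod_Ico_add' (fun k => f k ^ 2),
    zero_add, Ico_add_one_right_eq_Icc]

noncomputable def annulusKasteleyn (N n : ℕ) (ζ : ℂ) : Matrix (ZMod N × Fin n) (ZMod N × Fin n) ℂ :=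
  of fun p q =>
    (if q.1 = p.1 + 1 ∧ q.2 = p.2 then ζ else 0) +
    (if q.1 = p.1 - 1 ∧ q.2 = p.2 then ζ⁻¹ else 0) +
    (if q.1 = p.1 then
      Complex.I * ((if (q.2 : ℕ) = (p.2 : ℕ) + 1 then 1 else 0) +
        (if (p.2 : ℕ) = (q.2 : ℕ) + 1 then 1 else 0))
    else 0)

theorem annulusKasteleyn_eq_kronecker (N n : ℕ) [DecidableRel (pathGraph n).Adj] (ζ : ℂ) :
    annulusKasteleyn N n ζ = twistedCycle N ζ ⊗ₖ (1 : Matrix (Fin n) (Fin n) ℂ) +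
      (1 : Matrix (ZMod N) (ZMod N) ℂ) ⊗ₖ (Complex.I • (pathGraph n).adjMatrix ℂ) := by
  ext ⟨x, y⟩ ⟨x', y'⟩
  simp only [annulusKasteleyn, of_apply, Matrix.add_apply, kroneckerMap_apply, one_apply,
    Matrix.smul_apply, smul_eq_mul, twistedCycle, adjMatrix_pathGraph_apply]
  by_cases hy : y' = y
  · subst hy
    simp
  · have hy' : ¬y = y' := Ne.symm hy
    by_cases hx : x' = x
    · subst hx
      simp [hy, hy']
    · simp [hx, hy, hy', Ne.symm hx]

theorem det_annulusKasteleyn {N : ℕ} [NeZero N] (n : ℕ) {ω : ℂ} (hω : IsPrimitiveRoot ω N)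
    (ζ : ℂ) :
    (annulusKasteleyn N n ζ).det = ∏ j : ZMod N, ∏ k : Fin n, (ζ * ω ^ j.val +
      (ζ * ω ^ j.val)⁻¹ + Complex.I * (2 * Real.cos (pathAngle n (k + 1)))) := by
  classical
  have hpath : (Complex.I • (pathGraph n).adjMatrix ℂ) * sineMatrix n = sineMatrix n *
      diagonal fun k : Fin n => Complex.I * (2 * Real.cos (pathAngle n (k + 1))) := by
    rw [Matrix.smul_mul, adjMatrix_pathGraph_mul_sineMatrix, ← Matrix.mul_smul, ← diagonal_smul]
    congr 2
    ext k
    simp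
  rw [annulusKasteleyn_eq_kronecker]
  exact det_kronecker_one_add_one_kronecker (twistedCycle_mul_fourierMatrix hω ζ) hpath
    (isUnit_det_fourierMatrix hω) (isUnit_det_sineMatrix n)

theorem annulus_kasteleyn_determinant_general (m n : ℕ) (hmodd : Odd m)
    (hneven : Even n) [NeZero (2 * m)] (ζ : ℂ) (hζ : ζ ≠ 0) :
    let Khat : Matrix (ZMod (2 * m) × Fin n) (ZMod (2 * m) × Fin n) ℂ :=
      Matrix.of fun p q =>
        (if q.1 = p.1 + 1 ∧ q.2 = p.2 then ζ else 0) +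
        (if q.1 = p.1 - 1 ∧ q.2 = p.2 then ζ⁻¹ else 0) +
        (if q.1 = p.1 then
          Complex.I * ((if (q.2 : ℕ) = (p.2 : ℕ) + 1 then 1 else 0) +
            (if (p.2 : ℕ) = (q.2 : ℕ) + 1 then 1 else 0))
        else 0)
    let z : ℂ := ζ ^ (2 * m)
    let α : ℕ → ℝ := fun k =>
      -Real.cos (Real.pi * k / (n + 1)) + Real.sqrt (1 + Real.cos (Real.pi * k / (n + 1)) ^ 2)
    Khat.det = ∏ k ∈ Finset.Icc 1 (n / 2),
      ((z + ((α k : ℂ)) ^ (2 * m)) * (z + (((α k : ℂ)) ^ (2 * m))⁻¹)) ^ 2 / z ^ 2 := by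
  intro Khat z α
  obtain ⟨ω, hω⟩ : ∃ ω : ℂ, IsPrimitiveRoot ω (2 * m) :=
    ⟨_, Complex.isPrimitiveRoot_exp _ (NeZero.ne _)⟩
  let g : ℕ → ℂ := fun k => -((z + (α k : ℂ) ^ (2 * m)) * (z + ((α k : ℂ) ^ (2 * m))⁻¹)) / z
  have hfactor (k : Fin n) : ∏ j : ZMod (2 * m), (ζ * ω ^ j.val + (ζ * ω ^ j.val)⁻¹ +
      Complex.I * (2 * Real.cos (pathAngle n (k + 1)))) = g (k + 1) :=
    (ZMod.prod_comp_val fun i => ζ * ω ^ i + (ζ * ω ^ i)⁻¹ +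
      Complex.I * (2 * Real.cos (pathAngle n (k + 1)))).trans
      (hω.prod_range_add_inv_add_I_mul hmodd hζ _)
  have hpair : ∀ k < n, g (n - k) = g (k + 1) := by
    intro k hk
    have hα : α (n - k) = (α (k + 1))⁻¹ := by
      show kasteleynAlpha (Real.cos (pathAngle n _)) = (kasteleynAlpha (Real.cos (pathAngle n _)))⁻¹
      rw [cos_pathAngle_sub hk, kasteleynAlpha_neg]
    simp only [g, hα]
    push_cast
    rw [inv_pow, inv_inv, mul_comm]
  calc Khat.det = ∏ k : Fin n, g (k + 1) := by
        rw [show Khat = annulusKasteleyn (2 * m) n ζ from rfl, det_annulusKasteleyn n hω, prod_comm]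
        exact prod_congr rfl fun k _ => hfactor k
    _ = ∏ k ∈ Icc 1 (n / 2), g k ^ 2 := prod_fin_succ_eq_prod_Icc_half_sq hneven g hpair
    _ = _ := prod_congr rfl fun k _ => by rw [div_pow, neg_sq]

/-- Proposition 6.1 in sign-unambiguous form: the determinant of the big Kasteleyn matrix
`K̂` of the `2m × n` square-grid graph on an annulus (with `m` odd, `n ≥ 2` even,
Kasteleyn sign `i` on vertical edges, parallel transport `ζ` on eastward horizontal
edges, `z = ζ^{2m}`) equals `∏_{k=1}^{n/2} ((z + α_k^{2m})(z + α_k^{−2m}))²/z²`, where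
`α_k = −cos(πk/(n+1)) + √(1 + cos²(πk/(n+1)))`. -/
theorem annulus_kasteleyn_determinant (m n : ℕ) (hmodd : Odd m) (hm : 1 ≤ m)
    (hneven : Even n) (hn : 2 ≤ n) [NeZero (2 * m)] (ζ : ℂ) (hζ : ζ ≠ 0) :
    let Khat : Matrix (ZMod (2 * m) × Fin n) (ZMod (2 * m) × Fin n) ℂ :=
      Matrix.of fun p q =>
        (if q.1 = p.1 + 1 ∧ q.2 = p.2 then ζ else 0) +
        (if q.1 = p.1 - 1 ∧ q.2 = p.2 then ζ⁻¹ else 0) +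
        (if q.1 = p.1 then
          Complex.I * ((if (q.2 : ℕ) = (p.2 : ℕ) + 1 then 1 else 0) +
            (if (p.2 : ℕ) = (q.2 : ℕ) + 1 then 1 else 0))
        else 0)
    let z : ℂ := ζ ^ (2 * m)
    let α : ℕ → ℝ := fun k =>
      -Real.cos (Real.pi * k / (n + 1)) + Real.sqrt (1 + Real.cos (Real.pi * k / (n + 1)) ^ 2)
    Khat.det = ∏ k ∈ Finset.Icc 1 (n / 2),
      ((z + ((α k : ℂ)) ^ (2 * m)) * (z + (((α k : ℂ)) ^ (2 * m))⁻¹)) ^ 2 / z ^ 2 :=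
  annulus_kasteleyn_determinant_general m n hmodd hneven ζ hζ
end

section
/- For all natural numbers j and k, the minimum of (ℓ+m)² + (j+k−ℓ−m)² + (j−ℓ)² + m² over integers ℓ and m with 0 ≤ ℓ ≤ j and 0 ≤ m ≤ k equals ⌈2(j² + jk + k²)/3⌉. -/
/-- Existence of a near-optimal lattice point in the box. -/
lemma crossing_witness (j k : ℤ) (hj : 0 ≤ j) (hk : 0 ≤ k) :
    ∃ l m : ℤ, 0 ≤ l ∧ l ≤ j ∧ 0 ≤ m ∧ m ≤ k ∧
      (2*j + k - 3*l - 3*m)^2 ≤ 1 ∧ (j - l) * m = 0 := by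
  rcases le_total k j with h | h
  · refine ⟨(2*j + k + 1) / 3, 0, ?_, ?_, le_refl 0, hk, ?_, by ring⟩
    · omega
    · omega
    · have h1 : -1 ≤ 2*j + k - 3*((2*j + k + 1)/3) - 3*0 := by omega
      have h2 : 2*j + k - 3*((2*j + k + 1)/3) - 3*0 ≤ 1 := by omega
      nlinarith [h1, h2]
  · refine ⟨j, (k - j + 1) / 3, hj, le_refl j, ?_, ?_, ?_, by ring⟩
    · omega
    · omega
    · have h1 : -1 ≤ 2*j + k - 3*j - 3*((k - j + 1)/3) := by omega
      have h2 : 2*j + k - 3*j - 3*((k - j + 1)/3) ≤ 1 := by omega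
      nlinarith [h1, h2]

/-- The crossing-exponent minimization (Appendix B): for natural numbers `j, k`, the
minimum of `(ℓ+m)² + (j+k−ℓ−m)² + (j−ℓ)² + m²` over integers `0 ≤ ℓ ≤ j`, `0 ≤ m ≤ k`
equals `⌈2(j² + jk + k²)/3⌉`. -/
theorem crossing_exponent (j k : ℕ) :
    IsLeast
      {v : ℤ | ∃ l m : ℤ, 0 ≤ l ∧ l ≤ (j : ℤ) ∧ 0 ≤ m ∧ m ≤ (k : ℤ) ∧
        v = (l + m) ^ 2 + ((j : ℤ) + (k : ℤ) - l - m) ^ 2 + ((j : ℤ) - l) ^ 2 + m ^ 2}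
      ⌈(2 * ((j : ℚ) ^ 2 + (j : ℚ) * (k : ℚ) + (k : ℚ) ^ 2)) / 3⌉ := by
  set J : ℤ := (j : ℤ) with hJ
  set K : ℤ := (k : ℤ) with hK
  have hj : 0 ≤ J := Int.ofNat_nonneg j
  have hk : 0 ≤ K := Int.ofNat_nonneg k
  set N : ℤ := J^2 + J*K + K^2 with hN
  have hcast : (2 * ((j : ℚ) ^ 2 + (j : ℚ) * (k : ℚ) + (k : ℚ) ^ 2)) / 3
      = ((2 * N : ℤ) : ℚ) / 3 := by
    push_cast [hN, hJ, hK]; ring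
  constructor
  · -- membership
    obtain ⟨l, m, hl0, hlj, hm0, hmk, hsq, hzero⟩ := crossing_witness J K hj hk
    refine ⟨l, m, hl0, hlj, hm0, hmk, ?_⟩
    set f : ℤ := (l + m) ^ 2 + (J + K - l - m) ^ 2 + (J - l) ^ 2 + m ^ 2 with hf
    have hid : 3 * f - 2 * N = (2*J + K - 3*l - 3*m)^2 + 6 * ((J - l) * m) := by
      rw [hf, hN]; ring
    have h1 : 0 ≤ 3 * f - 2 * N := by
      rw [hid, hzero]; positivity
    have h2 : 3 * f - 2 * N ≤ 1 := by
      rw [hid, hzero]; simpa using hsq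
    rw [hcast, Int.ceil_eq_iff]
    constructor
    · have h3 : ((3 * f : ℤ) : ℚ) ≤ ((2 * N + 1 : ℤ) : ℚ) := by
        exact_mod_cast (by omega : 3 * f ≤ 2 * N + 1)
      push_cast [hf, hN, hJ, hK]
      push_cast [hf, hN, hJ, hK] at h3
      linarith
    · have h3 : ((2 * N : ℤ) : ℚ) ≤ ((3 * f : ℤ) : ℚ) := by
        exact_mod_cast (by omega : 2 * N ≤ 3 * f)
      push_cast [hf, hN, hJ, hK]
      push_cast [hf, hN, hJ, hK] at h3
      linarith
  · rintro v ⟨l, m, hl0, hlj, hm0, hmk, rfl⟩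
    have key : 2 * N ≤ 3 * ((l + m) ^ 2 + (J + K - l - m) ^ 2 + (J - l) ^ 2 + m ^ 2) := by
      nlinarith [sq_nonneg (2*J + K - 3*l - 3*m), mul_nonneg (sub_nonneg.mpr hlj) hm0]
    rw [hcast, Int.ceil_le]
    have key' : ((2 * N : ℤ) : ℚ) ≤
        ((3 * ((l + m) ^ 2 + (J + K - l - m) ^ 2 + (J - l) ^ 2 + m ^ 2) : ℤ) : ℚ) := by
      exact_mod_cast key
    push_cast [hN, hJ, hK]
    push_cast [hN, hJ, hK] at key'
    linarith
end
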